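/- Let q, r, n₁ be positive integers with n₁ | qr, and let m, n₂ ∈ ℤ. Then Σ_{a mod q, gcd(a,q)=1} e(ma/q) · S(ra, n₂; qr/n₁) = Σ_{d | q} d · μ(q/d) · Σ_α e(n₂ ᾱ/(qr/n₁)), where the inner sum runs over residues α modulo qr/n₁ with gcd(α, qr/n₁) = 1 satisfying n₁α ≡ −m (mod d) (a condition depending only on α modulo qr/n₁, since d | q and q divides n₁ · (qr/n₁)), ᾱ denotes the multiplicative inverse of α modulo qr/n₁, and μ is the Möbius function. -/

import Mathlib

open Finset
open scoped Classical

/-- `e(n/c) = exp(2πin/c)`, the additive character modulo `c` evaluated at the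
integer `n`. -/
noncomputable def eMod (c : ℕ) (n : ℤ) : ℂ :=
  Complex.exp (2 * Real.pi * Complex.I * n / c)

/-- The Kloosterman sum `S(u, v; c) = Σ_{x mod c, (x,c)=1} e((ux + v x̄)/c)`. -/
noncomputable def kloos (u v : ℤ) (c : ℕ) : ℂ :=
  ∑ x ∈ (Finset.range c).filter (fun x => Nat.Coprime x c),
    eMod c (u * x + v * (((x : ZMod c)⁻¹).val : ℤ))

lemma eMod_add (c : ℕ) (a b : ℤ) : eMod c (a + b) = eMod c a * eMod c b := by
  unfold eMod
  rw [← Complex.exp_add]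
  congr 1
  push_cast
  ring

lemma eMod_one (c : ℕ) (hc : c ≠ 0) (t : ℤ) : eMod c ((c : ℤ) * t) = 1 := by
  unfold eMod
  have : 2 * (Real.pi : ℂ) * Complex.I * (c * (t:ℂ)) / c = t * (2 * Real.pi * Complex.I) := by
    have hc' : (c : ℂ) ≠ 0 := Nat.cast_ne_zero.mpr hc
    field_simp
  push_cast
  rw [this, Complex.exp_int_mul_two_pi_mul_I]

lemma eMod_pow (c : ℕ) (k : ℤ) (b : ℕ) : eMod c (k * b) = (eMod c k) ^ b := by
  unfold eMod
  rw [← Complex.exp_nat_mul]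
  congr 1
  push_cast
  ring

lemma sum_eMod (c : ℕ) (hc : 0 < c) (k : ℤ) :
    ∑ b ∈ range c, eMod c (k * b) = if (c : ℤ) ∣ k then (c : ℂ) else 0 := by
  simp only [eMod_pow]
  split_ifs with h
  · obtain ⟨t, rfl⟩ := h
    rw [eMod_one c hc.ne' t]
    simp
  · have hζ : eMod c k ≠ 1 := by
      intro hone
      unfold eMod at hone
      rw [Complex.exp_eq_one_iff] at hone
      obtain ⟨n, hn⟩ := hone
      apply h
      refine ⟨n, ?_⟩
      have hc' : (c : ℂ) ≠ 0 := Nat.cast_ne_zero.mpr hc.ne'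
      have hpi : (2 * (Real.pi : ℂ) * Complex.I) ≠ 0 := by
        simp [Real.pi_ne_zero, Complex.I_ne_zero]
      have : (k : ℂ) = (c : ℂ) * n := by
        field_simp at hn
        apply mul_left_cancel₀ hpi
        rw [hn]
      exact_mod_cast this
    rw [geom_sum_eq hζ]
    have hpow : eMod c k ^ c = 1 := by
      rw [← eMod_pow]
      rw [mul_comm]
      exact eMod_one c hc.ne' k
    rw [hpow]
    simp

lemma sum_moebius_divisors (n : ℕ) :
    ∑ d ∈ n.divisors, (ArithmeticFunction.moebius d : ℤ) =
      if n = 1 then 1 else 0 := by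
  have h := ArithmeticFunction.moebius_mul_coe_zeta
  have h2 : (ArithmeticFunction.moebius * (ArithmeticFunction.zeta :
      ArithmeticFunction ℕ) : ArithmeticFunction ℤ) n = (1 : ArithmeticFunction ℤ) n := by
    rw [h]
  rw [ArithmeticFunction.coe_mul_zeta_apply] at h2
  rw [h2, ArithmeticFunction.one_apply]

/-- Ramanujan sum identity. -/
lemma ramanujan_sum (q : ℕ) (hq : 0 < q) (k : ℤ) :
    ∑ a ∈ (range q).filter (fun a => Nat.Coprime a q), eMod q (k * a) =
      ∑ d ∈ q.divisors, (d : ℂ) * ((ArithmeticFunction.moebius (q / d) : ℤ) : ℂ) *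
        (if (d : ℤ) ∣ k then 1 else 0) := by
  rw [sum_filter]
  have step1 : ∀ a ∈ range q,
      (if Nat.Coprime a q then eMod q (k * a) else 0) =
      ∑ d ∈ q.divisors, (if d ∣ a then ((ArithmeticFunction.moebius d : ℤ) : ℂ) else 0)
        * eMod q (k * a) := by
    intro a _
    have hgcd : Nat.gcd a q ≠ 0 := fun h => hq.ne' (Nat.eq_zero_of_gcd_eq_zero_right h)
    have hdiv : (Nat.gcd a q).divisors = q.divisors.filter (fun d => d ∣ a) := by
      ext d
      simp only [Nat.mem_divisors, mem_filter]
      constructor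
      · rintro ⟨hd, -⟩
        exact ⟨⟨hd.trans (Nat.gcd_dvd_right a q), hq.ne'⟩, hd.trans (Nat.gcd_dvd_left a q)⟩
      · rintro ⟨⟨hdq, -⟩, hda⟩
        exact ⟨Nat.dvd_gcd hda hdq, hgcd⟩
    have hmoeb := sum_moebius_divisors (Nat.gcd a q)
    rw [hdiv] at hmoeb
    have : ((if Nat.gcd a q = 1 then (1:ℤ) else 0 : ℤ) : ℂ) =
        ∑ d ∈ q.divisors, (if d ∣ a then ((ArithmeticFunction.moebius d : ℤ) : ℂ) else 0) := by
      rw [← hmoeb]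
      push_cast [sum_filter]
      rfl
    unfold Nat.Coprime
    split_ifs with h
    · rw [if_pos h] at this
      rw [← sum_mul, ← this]
      simp
    · rw [if_neg h] at this
      rw [← sum_mul, ← this]
      simp
  rw [sum_congr rfl step1, sum_comm]
  rw [← Nat.sum_div_divisors q
    (fun d => (d : ℂ) * ((ArithmeticFunction.moebius (q / d) : ℤ) : ℂ) *
      (if (d : ℤ) ∣ k then 1 else 0))]
  refine sum_congr rfl fun d hd => ?_
  obtain ⟨hdq, -⟩ := Nat.mem_divisors.mp hd
  have hd0 : 0 < d := Nat.pos_of_mem_divisors hd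
  have hqd0 : 0 < q / d := Nat.div_pos (Nat.le_of_dvd hq hdq) hd0
  have key : ∑ a ∈ range q, (if d ∣ a then ((ArithmeticFunction.moebius d : ℤ) : ℂ) else 0)
      * eMod q (k * a)
      = ((ArithmeticFunction.moebius d : ℤ) : ℂ) * ∑ b ∈ range (q / d), eMod (q / d) (k * b) := by
    simp only [ite_mul, zero_mul, ← sum_filter, mul_sum]
    refine Finset.sum_nbij' (fun a => a / d) (fun b => d * b) ?_ ?_ ?_ ?_ ?_
    · intro a ha
      simp only [mem_filter, mem_range] at ha
      exact mem_range.mpr (Nat.div_lt_div_of_lt_of_dvd hdq ha.1)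
    · intro b hb
      simp only [mem_filter, mem_range] at hb ⊢
      constructor
      · calc d * b < d * (q / d) := (Nat.mul_lt_mul_left hd0).mpr hb
          _ = q := Nat.mul_div_cancel' hdq
      · exact Dvd.intro b rfl
    · intro a ha
      simp only [mem_filter] at ha
      exact Nat.mul_div_cancel' ha.2
    · intro b _
      exact Nat.mul_div_cancel_left b hd0
    · intro a ha
      simp only [mem_filter] at ha
      obtain ⟨b, rfl⟩ := ha.2
      rw [Nat.mul_div_cancel_left b hd0]
      congr 1
      unfold eMod
      congr 1
      have hq' : (q : ℂ) = (d : ℂ) * ((q / d : ℕ) : ℂ) := by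
        exact_mod_cast (Nat.mul_div_cancel' hdq).symm
      have h1 : (d : ℂ) ≠ 0 := Nat.cast_ne_zero.mpr hd0.ne'
      have h2 : ((q / d : ℕ) : ℂ) ≠ 0 := Nat.cast_ne_zero.mpr hqd0.ne'
      rw [hq']
      push_cast
      field_simp
  rw [key, sum_eMod (q / d) hqd0 k]
  have hflip : q / (q / d) = d := Nat.div_div_self hdq hq.ne'
  rw [hflip]
  split_ifs with h
  · ring
  · ring

/-- Expansion of the character sum
`Σ*_{a mod q} e(ma/q) S(ra, n₂; qr/n₁)` via Ramanujan sums, as established in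
the proof of Lemma 5.1 of the paper. -/
theorem charSum_eq_ramanujan_expansion
    (q r n₁ : ℕ) (hq : 0 < q) (hr : 0 < r) (hn₁ : 0 < n₁) (hdvd : n₁ ∣ q * r)
    (m n₂ : ℤ) :
    ∑ a ∈ (Finset.range q).filter (fun a => Nat.Coprime a q),
        eMod q (m * a) * kloos (r * a) n₂ (q * r / n₁) =
      ∑ d ∈ q.divisors,
        (d : ℂ) * ((ArithmeticFunction.moebius (q / d) : ℤ) : ℂ) *
          ∑ α ∈ (Finset.range (q * r / n₁)).filter
              (fun α => Nat.Coprime α (q * r / n₁) ∧ (d : ℤ) ∣ ((n₁ : ℤ) * α + m)),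
            eMod (q * r / n₁) (n₂ * (((α : ZMod (q * r / n₁))⁻¹).val : ℤ)) := by
  set c := q * r / n₁ with hc_def
  have hc : 0 < c := Nat.div_pos (Nat.le_of_dvd (Nat.mul_pos hq hr) hdvd) hn₁
  have hcn : (n₁ : ℂ) * (c : ℂ) = (q : ℂ) * (r : ℂ) := by
    exact_mod_cast congrArg (Nat.cast : ℕ → ℂ) (Nat.mul_div_cancel' hdvd)
  have hq' : (q : ℂ) ≠ 0 := Nat.cast_ne_zero.mpr hq.ne'
  have hc' : (c : ℂ) ≠ 0 := Nat.cast_ne_zero.mpr hc.ne'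
  unfold kloos
  simp only [mul_sum]
  rw [sum_comm]
  have step : ∀ x ∈ (range c).filter (fun x => Nat.Coprime x c),
      ∑ a ∈ (range q).filter (fun a => Nat.Coprime a q),
        eMod q (m * a) * eMod c ((r : ℤ) * a * x + n₂ * (((x : ZMod c)⁻¹).val : ℤ))
      = eMod c (n₂ * (((x : ZMod c)⁻¹).val : ℤ)) *
        ∑ d ∈ q.divisors, (d : ℂ) * ((ArithmeticFunction.moebius (q / d) : ℤ) : ℂ) *
          (if (d : ℤ) ∣ ((n₁ : ℤ) * x + m) then 1 else 0) := by
    intro x hx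
    rw [← ramanujan_sum q hq ((n₁ : ℤ) * x + m), mul_sum]
    refine sum_congr rfl fun a ha => ?_
    have h1 : eMod c ((r : ℤ) * a * x + n₂ * (((x : ZMod c)⁻¹).val : ℤ))
        = eMod c ((r : ℤ) * a * x) * eMod c (n₂ * (((x : ZMod c)⁻¹).val : ℤ)) :=
      eMod_add c _ _
    have h2 : eMod c ((r : ℤ) * a * x) = eMod q ((n₁ : ℤ) * x * a) := by
      unfold eMod
      congr 1
      field_simp
      ring_nf
      push_cast
      linear_combination (-((a : ℂ) * x)) * hcn
    rw [h1, h2, ← mul_assoc, ← eMod_add]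
    rw [mul_comm (eMod q _) _]
    congr 2
    ring
  rw [sum_congr rfl step]
  simp only [mul_sum]
  rw [sum_comm]
  refine sum_congr rfl fun d hd => ?_
  have hfil : (range c).filter
      (fun α => Nat.Coprime α c ∧ (d : ℤ) ∣ ((n₁ : ℤ) * α + m))
      = ((range c).filter (fun α => Nat.Coprime α c)).filter
          (fun α : ℕ => (d : ℤ) ∣ ((n₁ : ℤ) * α + m)) := by
    rw [filter_filter]
  rw [hfil]
  conv_rhs => rw [sum_filter]
  refine sum_congr rfl fun x hx => ?_
  split_ifs with h
  · ring
  · ring
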